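/- For n ≥ 2, the sequence c_n := |A_n \ A_{n-1}| satisfies c_{n-1}^2 ≤ c_n ≤ c_{n-1}^2 (1 + 4/c_{n-2}). -/

import Mathlib

open ZFSet Finset

noncomputable section

abbrev HFSet := ZFSet.{0}

/-- The adjunctive hierarchy of hereditarily finite sets. -/
def A : ℕ → Set HFSet
  | 0 => {∅}
  | n + 1 => {∅} ∪ {z | ∃ x ∈ A n, ∃ y ∈ A n, z = insert y x}

/-- Integer-indexed version, with `A n = ∅` for `n < 0`. -/
def Az (n : ℤ) : Set HFSet := if 0 ≤ n then A n.toNat else ∅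

/-- The cumulative hierarchy (von Neumann) of hereditarily finite sets. -/
def W : ℕ → HFSet
  | 0 => ∅
  | n + 1 => ZFSet.powerset (W n)

/-- A ZF set is hereditarily finite if it lies in some finite level of the
cumulative hierarchy. -/
def IsHF (x : HFSet) : Prop := ∃ n, x ∈ W n

/-- The adjunctive rank. -/
def ark (x : HFSet) : ℕ := sInf {n | x ∈ A n}

/-- The (von Neumann) rank of a hereditarily finite set. -/
def rk (x : HFSet) : ℕ := sInf {n | x ∈ W (n + 1)}

/-- `B n m` = sets in `A n \ A (n-1)` all of whose elements lie in `A m`. -/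
def B (n m : ℤ) : Set HFSet :=
  {x | x ∈ Az n ∧ x ∉ Az (n - 1) ∧ ∀ y, y ∈ x → y ∈ Az m}

def b (n m : ℤ) : ℕ := (B n m).ncard

def a (n : ℕ) : ℕ := (A n).ncard

def c (n : ℕ) : ℕ := (Az n \ Az ((n : ℤ) - 1)).ncard

/-! ### Auxiliary lemmas -/

lemma mem_A_succ {n : ℕ} {z : HFSet} :
    z ∈ A (n + 1) ↔ z = ∅ ∨ ∃ x ∈ A n, ∃ y ∈ A n, z = insert y x := by
  show z ∈ {(∅ : HFSet)} ∪ {z | ∃ x ∈ A n, ∃ y ∈ A n, z = insert y x} ↔ _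
  simp [Set.mem_union]

lemma empty_mem_A : ∀ n, (∅ : HFSet) ∈ A n
  | 0 => rfl
  | n + 1 => mem_A_succ.2 (Or.inl rfl)

lemma A_mono_succ : ∀ n, A n ⊆ A (n + 1)
  | 0 => by
    intro z hz
    rcases hz with rfl
    exact empty_mem_A 1
  | n + 1 => by
    intro z hz
    rcases mem_A_succ.1 hz with rfl | ⟨x, hx, y, hy, rfl⟩
    · exact empty_mem_A _
    · exact mem_A_succ.2 (Or.inr ⟨x, A_mono_succ n hx, y, A_mono_succ n hy, rfl⟩)

lemma A_mono {m n : ℕ} (h : m ≤ n) : A m ⊆ A n := by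
  induction n with
  | zero => rw [Nat.le_zero.1 h]
  | succ k ih =>
    rcases Nat.lt_or_ge m (k+1) with h' | h'
    · exact (ih (Nat.lt_succ_iff.1 h')).trans (A_mono_succ k)
    · rw [Nat.le_antisymm h h']

/-- Elements of a member of `A (n+1)` lie in `A n`. -/
lemma mem_of_mem_A : ∀ (n : ℕ) {x y : HFSet}, x ∈ A (n + 1) → y ∈ x → y ∈ A n := by
  intro n
  induction n with
  | zero =>
    intro x y hx hy
    rcases mem_A_succ.1 hx with rfl | ⟨x', hx', y', hy', rfl⟩
    · exact absurd hy (ZFSet.notMem_empty y)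
    · rcases ZFSet.mem_insert_iff.1 hy with rfl | h
      · exact hy'
      · rcases hx' with rfl
        exact absurd h (ZFSet.notMem_empty y)
  | succ k ih =>
    intro x y hx hy
    rcases mem_A_succ.1 hx with rfl | ⟨x', hx', y', hy', rfl⟩
    · exact absurd hy (ZFSet.notMem_empty y)
    · rcases ZFSet.mem_insert_iff.1 hy with rfl | h
      · exact hy'
      · exact A_mono_succ k (ih hx' h)

lemma A_finite : ∀ n, (A n).Finite
  | 0 => Set.finite_singleton _
  | n + 1 => by
    have h2 : {z : HFSet | ∃ x ∈ A n, ∃ y ∈ A n, z = insert y x} ⊆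
        Set.image2 (fun x y => insert y x) (A n) (A n) := by
      rintro z ⟨x, hx, y, hy, rfl⟩
      exact ⟨x, hx, y, hy, rfl⟩
    exact (Set.finite_singleton _).union
      (((A_finite n).image2 _ (A_finite n)).subset h2)

/-- Iterated singletons. -/
def sk : ℕ → HFSet
  | 0 => ∅
  | n + 1 => insert (sk n) ∅

lemma sk_mem_A : ∀ n, sk n ∈ A n
  | 0 => rfl
  | n + 1 => mem_A_succ.2 (Or.inr ⟨∅, empty_mem_A n, sk n, sk_mem_A n, rfl⟩)

lemma sk_not_mem_A : ∀ n, sk (n + 1) ∉ A n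
  | 0 => by
    intro h
    have : sk 1 = ∅ := h
    have h0 : (∅ : HFSet) ∈ sk 1 := ZFSet.mem_insert _ _
    rw [this] at h0
    exact ZFSet.notMem_empty _ h0
  | n + 1 => by
    intro h
    have : sk (n + 1) ∈ sk (n + 2) := ZFSet.mem_insert _ _
    exact sk_not_mem_A n (mem_of_mem_A n h this)

lemma diff_nonempty (n : ℕ) : (A (n + 1) \ A n).Nonempty :=
  ⟨sk (n + 1), sk_mem_A (n + 1), sk_not_mem_A n⟩

lemma diff_ncard_pos (n : ℕ) : 0 < (A (n + 1) \ A n).ncard :=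
  (diff_nonempty n).ncard_pos ((A_finite (n+1)).diff)

lemma ncard_prod {α β : Type*} (s : Set α) (t : Set β) :
    (s ×ˢ t).ncard = s.ncard * t.ncard := by
  rw [← Nat.card_coe_set_eq, ← Nat.card_coe_set_eq, ← Nat.card_coe_set_eq,
    Nat.card_congr (Equiv.Set.prod s t), Nat.card_prod]

/-- Lower-bound injection: `(u, w) ↦ insert u w`. -/
lemma card_lower (m : ℕ) :
    (A (m + 1) \ A m).ncard * (A (m + 1)).ncard ≤ (A (m + 2) \ A (m + 1)).ncard := by
  rw [← ncard_prod]
  refine Set.ncard_le_ncard_of_injOn (fun p : HFSet × HFSet => insert p.1 p.2) ?_ ?_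
    ((A_finite (m + 2)).diff)
  · rintro ⟨u, w⟩ ⟨⟨hu1, hu2⟩, hw⟩
    refine ⟨mem_A_succ.2 (Or.inr ⟨w, hw, u, hu1, rfl⟩), fun h => ?_⟩
    exact hu2 (mem_of_mem_A m h (ZFSet.mem_insert u w))
  · rintro ⟨u, w⟩ ⟨⟨hu1, hu2⟩, hw⟩ ⟨u', w'⟩ ⟨⟨hu1', hu2'⟩, hw'⟩ h
    simp only at h
    have huu : u = u' := by
      have : u ∈ insert u' w' := h ▸ ZFSet.mem_insert u w
      rcases ZFSet.mem_insert_iff.1 this with h' | h'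
      · exact h'
      · exact absurd (mem_of_mem_A m hw' h') hu2
    subst huu
    have hww : w = w' := by
      apply ZFSet.ext
      intro t
      constructor
      · intro ht
        have : t ∈ insert u w' := h ▸ ZFSet.mem_insert_of_mem u ht
        rcases ZFSet.mem_insert_iff.1 this with rfl | h'
        · exact absurd (mem_of_mem_A m hw ht) hu2
        · exact h'
      · intro ht
        have : t ∈ insert u w := h ▸ ZFSet.mem_insert_of_mem u ht
        rcases ZFSet.mem_insert_iff.1 this with rfl | h'
        · exact absurd (mem_of_mem_A m hw' ht) hu2
        · exact h'
    rw [hww]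

/-- For `x ∈ A (m+2) \ A (m+1)` there is a decomposition `x = insert y w`
with `w, y ∈ A (m+1)`, not both in `A m`. -/
lemma exists_decomp {m : ℕ} {x : HFSet} (hx : x ∈ A (m + 2) \ A (m + 1)) :
    ∃ p : HFSet × HFSet, p.1 ∈ A (m + 1) ∧ p.2 ∈ A (m + 1) ∧ x = insert p.2 p.1 := by
  rcases mem_A_succ.1 hx.1 with rfl | ⟨w, hw, y, hy, rfl⟩
  · exact absurd (empty_mem_A (m + 1)) hx.2
  · exact ⟨(w, y), hw, hy, rfl⟩

/-- Upper-bound injection. -/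
lemma card_upper (m : ℕ) :
    (A (m + 2) \ A (m + 1)).ncard ≤
      ((A (m + 1) ×ˢ A (m + 1)) \ (A m ×ˢ A m)).ncard := by
  classical
  set f : HFSet → HFSet × HFSet := fun x =>
    if h : ∃ p : HFSet × HFSet, p.1 ∈ A (m + 1) ∧ p.2 ∈ A (m + 1) ∧ x = insert p.2 p.1
    then h.choose else (∅, ∅) with hf
  have key : ∀ x ∈ A (m + 2) \ A (m + 1),
      (f x).1 ∈ A (m + 1) ∧ (f x).2 ∈ A (m + 1) ∧ x = insert (f x).2 (f x).1 := by
    intro x hx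
    have h := exists_decomp hx
    simp only [hf, dif_pos h]
    exact h.choose_spec
  refine Set.ncard_le_ncard_of_injOn f ?_ ?_
    (((A_finite (m + 1)).prod (A_finite (m + 1))).diff)
  · intro x hx
    obtain ⟨h1, h2, h3⟩ := key x hx
    refine ⟨⟨h1, h2⟩, fun hcon => ?_⟩
    exact hx.2 (mem_A_succ.2 (Or.inr ⟨(f x).1, hcon.1, (f x).2, hcon.2, h3⟩))
  · intro x hx y hy hxy
    obtain ⟨_, _, h3⟩ := key x hx
    obtain ⟨_, _, h3'⟩ := key y hy
    rw [h3, h3', hxy]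

lemma card_upper' (m : ℕ) :
    (A (m + 2) \ A (m + 1)).ncard ≤
      (A (m + 1) \ A m).ncard ^ 2 + 2 * (A m).ncard * (A (m + 1) \ A m).ncard := by
  have h1 := card_upper m
  have hsub : (A m ×ˢ A m) ⊆ (A (m + 1) ×ˢ A (m + 1)) :=
    Set.prod_mono (A_mono_succ m) (A_mono_succ m)
  rw [Set.ncard_diff hsub ((A_finite m).prod (A_finite m))] at h1
  rw [ncard_prod, ncard_prod] at h1
  have h2 : (A (m + 1) \ A m).ncard + (A m).ncard = (A (m + 1)).ncard :=
    Set.ncard_diff_add_ncard_of_subset (A_mono_succ m) (A_finite (m + 1))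
  set cm := (A (m + 1) \ A m).ncard
  set am := (A m).ncard
  have h3 : (A (m + 1)).ncard * (A (m + 1)).ncard = cm ^ 2 + 2 * am * cm + am * am := by
    rw [← h2]; ring
  rw [h3, Nat.add_sub_cancel] at h1
  exact h1

/-! ### Translating `c` to `A`-levels -/

lemma Az_natCast (k : ℕ) : Az (k : ℤ) = A k := by
  simp [Az]

lemma c_succ (k : ℕ) : c (k + 1) = (A (k + 1) \ A k).ncard := by
  have h1 : ((k + 1 : ℕ) : ℤ) - 1 = (k : ℤ) := by push_cast; ring
  rw [c, h1, Az_natCast, Az_natCast]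

lemma c_zero : c 0 = 1 := by
  have h1 : ((0 : ℕ) : ℤ) - 1 = (-1 : ℤ) := by norm_num
  rw [c, h1, Az_natCast]
  have : Az (-1) = ∅ := by simp [Az]
  rw [this, Set.diff_empty]
  show (A 0).ncard = 1
  simp [A]

lemma c_pos (k : ℕ) : 0 < c k := by
  cases k with
  | zero => rw [c_zero]; norm_num
  | succ m => rw [c_succ]; exact diff_ncard_pos m

/-- `a q * c q ≤ c (q+1)` (with the degenerate `q = 0` case). -/
lemma ca_le (q : ℕ) : (A q).ncard * c q ≤ c (q + 1) := by
  cases q with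
  | zero =>
    rw [c_zero]
    have : (A 0).ncard = 1 := by simp [A]
    rw [this, mul_one]
    exact c_pos 1
  | succ r =>
    rw [c_succ, c_succ]
    calc (A (r + 1)).ncard * (A (r + 1) \ A r).ncard
        = (A (r + 1) \ A r).ncard * (A (r + 1)).ncard := by ring
      _ ≤ (A (r + 2) \ A (r + 1)).ncard := card_lower r

theorem stmt11 (n : ℕ) (hn : 2 ≤ n) :
    c (n - 1) ^ 2 ≤ c n ∧
      (c n : ℝ) ≤ (c (n - 1) : ℝ) ^ 2 * (1 + 4 / (c (n - 2) : ℝ)) := by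
  obtain ⟨q, rfl⟩ : ∃ q, n = q + 2 := ⟨n - 2, by omega⟩
  have hn1 : q + 2 - 1 = q + 1 := by omega
  have hn2 : q + 2 - 2 = q := by omega
  rw [hn1, hn2]
  have hC0le : c (q + 1) ≤ (A (q + 1)).ncard := by
    rw [c_succ]
    exact Set.ncard_le_ncard Set.diff_subset (A_finite (q + 1))
  -- lower bound
  have hlow : c (q + 1) ^ 2 ≤ c (q + 2) := by
    rw [c_succ, c_succ]
    calc (A (q + 1) \ A q).ncard ^ 2
        ≤ (A (q + 1) \ A q).ncard * (A (q + 1)).ncard := by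
          rw [sq]
          exact Nat.mul_le_mul_left _ (by rw [← c_succ]; exact hC0le)
      _ ≤ (A (q + 2) \ A (q + 1)).ncard := card_lower q
  refine ⟨hlow, ?_⟩
  -- upper bound, first in ℕ
  have hup : c (q + 2) * c q ≤ c (q + 1) ^ 2 * c q + 4 * c (q + 1) ^ 2 := by
    have h1 : c (q + 2) ≤ c (q + 1) ^ 2 + 2 * (A q).ncard * c (q + 1) := by
      rw [c_succ, c_succ]
      exact card_upper' q
    calc c (q + 2) * c q
        ≤ (c (q + 1) ^ 2 + 2 * (A q).ncard * c (q + 1)) * c q :=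
          Nat.mul_le_mul_right _ h1
      _ = c (q + 1) ^ 2 * c q + 2 * c (q + 1) * ((A q).ncard * c q) := by ring
      _ ≤ c (q + 1) ^ 2 * c q + 2 * c (q + 1) * c (q + 1) := by
          exact Nat.add_le_add_left (Nat.mul_le_mul_left _ (ca_le q)) _
      _ = c (q + 1) ^ 2 * c q + 2 * c (q + 1) ^ 2 := by ring
      _ ≤ c (q + 1) ^ 2 * c q + 4 * c (q + 1) ^ 2 := by
          exact Nat.add_le_add_left (Nat.mul_le_mul_right _ (by norm_num)) _
  -- pass to ℝ
  have hq : (0 : ℝ) < (c q : ℝ) := by exact_mod_cast c_pos q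
  have hupR : (c (q + 2) : ℝ) * c q ≤ (c (q + 1) : ℝ) ^ 2 * c q + 4 * (c (q + 1) : ℝ) ^ 2 := by
    exact_mod_cast hup
  have heq : (c (q + 1) : ℝ) ^ 2 * (1 + 4 / (c q : ℝ)) =
      ((c (q + 1) : ℝ) ^ 2 * c q + 4 * (c (q + 1) : ℝ) ^ 2) / c q := by
    field_simp
  rw [heq, le_div_iff₀ hq]
  exact hupR
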